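/- For all integers p, q, r: if p is even then x_{p,q,r} ▷ e = x_{p−1,−q,−r+1} and x_{p,q,r} ▷ f = x_{p+1,−q,−r+1}; if p is odd then x_{p,q,r} ▷ e = x_{p+1,−q,−r+1} and x_{p,q,r} ▷ f = x_{p−1,−q,−r+1}. -/

import Mathlib

/-!
Work in the permutation group of `Q`, writing `A, …, F` for the point symmetries of `a, …, f`.
The relations make `A, B, E, F` involutions with `D = E A = F B` and `C = (D (BA)^k)⁻¹`.
Conjugation by `A` therefore inverts `D` and `BA`, which commute because `A` and `B` both invert
`D`, so it inverts `C` too; likewise for `B`. Hence `E = D A` maps `D^r C^q` to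
`D^{1-r} C^{-q} A` and `F = D B` maps it to `D^{1-r} C^{-q} B`, and on the orbit of `a` under
`⟨A, B⟩` the leftover `A` or `B` moves the index `p` by one.
-/

/-- A quandle as in the paper: a set with operations `▷` and `▷⁻¹` satisfying
axioms A1, A2, A3. -/
class PaperQuandle (Q : Type*) where
  rhd : Q → Q → Q
  rhdInv : Q → Q → Q
  fix : ∀ x : Q, rhd x x = x
  inv_rhd : ∀ x y : Q, rhdInv (rhd x y) y = x
  rhd_inv : ∀ x y : Q, rhd (rhdInv x y) y = x
  self_distrib : ∀ x y z : Q, rhd (rhd x y) z = rhd (rhd x z) (rhd y z)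

infixl:65 " ▷ " => PaperQuandle.rhd
infixl:65 " ▷⁻¹ " => PaperQuandle.rhdInv

/-- The point symmetry at `u`, as a permutation of `Q`: `x ↦ x ▷ u`,
with inverse `x ↦ x ▷⁻¹ u`. -/
def ptSym {Q : Type*} [PaperQuandle Q] (u : Q) : Equiv.Perm Q where
  toFun x := x ▷ u
  invFun x := x ▷⁻¹ u
  left_inv x := PaperQuandle.inv_rhd x u
  right_inv x := PaperQuandle.rhd_inv x u

/-- The element `x_{p,q,r} = a^{(ba)^t c^q d^r}` if `p = 2t`, and
`a^{(ba)^t b c^q d^r}` if `p = 2t+1`.  Here the word `ba` (apply `b`, then `a`)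
is the permutation `ptSym a * ptSym b`. -/
def X {Q : Type*} [PaperQuandle Q] (a b c d : Q) (p q r : ℤ) : Q :=
  if Even p then
    (ptSym d ^ r) ((ptSym c ^ q) (((ptSym a * ptSym b) ^ (p / 2)) a))
  else
    (ptSym d ^ r) ((ptSym c ^ q) ((((ptSym a * ptSym b) ^ ((p - 1) / 2)) a) ▷ b))

section

variable {G : Type*} [Group G] {g h x y : G}

def ConjInverts (g x : G) : Prop := g * x * g⁻¹ = x⁻¹

theorem ConjInverts.inv (hx : ConjInverts g x) : ConjInverts g x⁻¹ := by
  rw [ConjInverts, inv_inv]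
  simpa [mul_assoc] using congrArg (·⁻¹) hx

theorem ConjInverts.zpow (hx : ConjInverts g x) (n : ℤ) : ConjInverts g (x ^ n) := by
  rw [ConjInverts, ← conj_zpow, hx, inv_zpow]

theorem ConjInverts.mul (hx : ConjInverts g x) (hy : ConjInverts g y) (hxy : Commute x y) :
    ConjInverts g (x * y) := by
  have : g * (x * y) * g⁻¹ = (g * x * g⁻¹) * (g * y * g⁻¹) := by group
  rw [ConjInverts, this, hx, hy, ← mul_inv_rev, hxy.eq]

theorem ConjInverts.commute_mul (hg : ConjInverts g x) (hh : ConjInverts h x) :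
    Commute (g * h) x := by
  have : g * h * x * (g * h)⁻¹ = (g * (h * x * h⁻¹) * g⁻¹) := by group
  rw [Commute, SemiconjBy, ← mul_inv_eq_iff_eq_mul, this, hh, hg.inv, inv_inv]

theorem ConjInverts.mul_zpow (hx : ConjInverts g x) (n : ℤ) : g * x ^ n = x ^ (-n) * g := by
  rw [← mul_inv_eq_iff_eq_mul, hx.zpow n, zpow_neg]

theorem ConjInverts.mul_mul_zpow_mul_zpow (hx : ConjInverts g x) (hy : ConjInverts g y)
    (r q : ℤ) (z : G) : x * g * (x ^ r * (y ^ q * z)) = x ^ (-r + 1) * (y ^ (-q) * (g * z)) := by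
  calc x * g * (x ^ r * (y ^ q * z)) = x * (g * x ^ r) * (y ^ q * z) := by
        simp only [mul_assoc]
    _ = x * x ^ (-r) * (g * y ^ q * z) := by rw [hx.mul_zpow]; simp only [mul_assoc]
    _ = x ^ (-r + 1) * (y ^ (-q) * (g * z)) := by
        rw [hy.mul_zpow, ← zpow_one_add, add_comm]; simp only [mul_assoc]

theorem conjInverts_mul_self (hg : g * g = 1) (hh : h * h = 1) : ConjInverts g (h * g) := by
  rw [ConjInverts, inv_eq_of_mul_eq_one_right hg, mul_inv_rev, inv_eq_of_mul_eq_one_right hg,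
    inv_eq_of_mul_eq_one_right hh, ← mul_assoc, mul_assoc _ g, hg, mul_one]

theorem mul_mul_zpow_of_mul_self_eq_one (hg : g * g = 1) (t : ℤ) :
    g * (g * h) ^ t = h * (g * h) ^ (t - 1) :=
  calc g * (g * h) ^ t = g * (g * h) * (g * h) ^ (t - 1) := by
        rw [mul_assoc, ← zpow_one_add, add_sub_cancel]
    _ = h * (g * h) ^ (t - 1) := by rw [← mul_assoc, hg, one_mul]

end

section

variable {G : Type*} [Group G]

/-- Relations between the point symmetries `A = S_a, …, F = S_f`. Permutations compose right to
left, so the paper's word `dea` becomes `A * E * D`. -/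
structure GraphRelations (k : ℤ) (A B C D E F : G) : Prop where
  sq_a : A * A = 1
  sq_b : B * B = 1
  sq_e : E * E = 1
  sq_f : F * F = 1
  dea : A * E * D = 1
  bdf : F * D * B = 1
  cke : E * A * (B * A) ^ k * C = 1

namespace GraphRelations

variable {k : ℤ} {A B C D E F : G}

theorem d_eq_e_mul_a (h : GraphRelations k A B C D E F) : D = E * A := by
  rw [eq_inv_of_mul_eq_one_right h.dea, mul_inv_rev, inv_eq_of_mul_eq_one_right h.sq_a,
    inv_eq_of_mul_eq_one_right h.sq_e]

theorem d_eq_f_mul_b (h : GraphRelations k A B C D E F) : D = F * B := by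
  have hDB : D * B = F⁻¹ := eq_inv_of_mul_eq_one_right (by rw [← mul_assoc]; exact h.bdf)
  rw [eq_mul_inv_of_mul_eq hDB, inv_eq_of_mul_eq_one_right h.sq_b,
    inv_eq_of_mul_eq_one_right h.sq_f]

theorem e_eq_d_mul_a (h : GraphRelations k A B C D E F) : E = D * A := by
  rw [h.d_eq_e_mul_a, mul_assoc, h.sq_a, mul_one]

theorem f_eq_d_mul_b (h : GraphRelations k A B C D E F) : F = D * B := by
  rw [h.d_eq_f_mul_b, mul_assoc, h.sq_b, mul_one]

theorem c_eq (h : GraphRelations k A B C D E F) : C = (D * (B * A) ^ k)⁻¹ := by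
  rw [h.d_eq_e_mul_a]
  exact eq_inv_of_mul_eq_one_right (by simpa only [mul_assoc] using h.cke)

theorem conjInverts_a_d (h : GraphRelations k A B C D E F) : ConjInverts A D :=
  h.d_eq_e_mul_a ▸ conjInverts_mul_self h.sq_a h.sq_e

theorem conjInverts_b_d (h : GraphRelations k A B C D E F) : ConjInverts B D :=
  h.d_eq_f_mul_b ▸ conjInverts_mul_self h.sq_b h.sq_f

theorem conjInverts_c (h : GraphRelations k A B C D E F) {g : G} (hgD : ConjInverts g D)
    (hgBA : ConjInverts g (B * A)) : ConjInverts g C := by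
  have hD : Commute D (B * A) := (h.conjInverts_b_d.commute_mul h.conjInverts_a_d).symm
  rw [h.c_eq]
  exact (hgD.mul (hgBA.zpow k) (hD.zpow_right k)).inv

theorem conjInverts_a_c (h : GraphRelations k A B C D E F) : ConjInverts A C :=
  h.conjInverts_c h.conjInverts_a_d (conjInverts_mul_self h.sq_a h.sq_b)

theorem conjInverts_b_c (h : GraphRelations k A B C D E F) : ConjInverts B C := by
  refine h.conjInverts_c h.conjInverts_b_d ?_
  have hAB := (conjInverts_mul_self h.sq_b h.sq_a).inv
  rwa [mul_inv_rev, inv_eq_of_mul_eq_one_right h.sq_a, inv_eq_of_mul_eq_one_right h.sq_b] at hAB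

theorem e_mul_zpow_mul_zpow (h : GraphRelations k A B C D E F) (r q : ℤ) (z : G) :
    E * (D ^ r * (C ^ q * z)) = D ^ (-r + 1) * (C ^ (-q) * (A * z)) := by
  rw [h.e_eq_d_mul_a]
  exact h.conjInverts_a_d.mul_mul_zpow_mul_zpow h.conjInverts_a_c r q z

theorem f_mul_zpow_mul_zpow (h : GraphRelations k A B C D E F) (r q : ℤ) (z : G) :
    F * (D ^ r * (C ^ q * z)) = D ^ (-r + 1) * (C ^ (-q) * (B * z)) := by
  rw [h.f_eq_d_mul_b]
  exact h.conjInverts_b_d.mul_mul_zpow_mul_zpow h.conjInverts_b_c r q z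

end GraphRelations

end

section

variable {Q : Type*} [PaperQuandle Q] {k : ℤ} {a b c d e f : Q}

theorem X_two_mul (t q r : ℤ) :
    X a b c d (2 * t) q r = (ptSym d ^ r * (ptSym c ^ q * (ptSym a * ptSym b) ^ t)) a := by
  simp [X]

theorem X_two_mul_add_one (t q r : ℤ) :
    X a b c d (2 * t + 1) q r =
      (ptSym d ^ r * (ptSym c ^ q * (ptSym b * (ptSym a * ptSym b) ^ t))) a := by
  rw [X, if_neg (Int.not_even_two_mul_add_one t), add_sub_cancel_right,
    Int.mul_ediv_cancel_left _ two_ne_zero]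
  rfl

theorem ptSym_mul_apply (u : Q) (σ : Equiv.Perm Q) (x : Q) : (ptSym u * σ) x = σ x ▷ u := rfl

theorem X_two_mul_rhd
    (h : GraphRelations k (ptSym a) (ptSym b) (ptSym c) (ptSym d) (ptSym e) (ptSym f))
    (t q r : ℤ) :
    X a b c d (2 * t) q r ▷ e = X a b c d (2 * t - 1) (-q) (-r + 1) ∧
      X a b c d (2 * t) q r ▷ f = X a b c d (2 * t + 1) (-q) (-r + 1) := by
  rw [show 2 * t - 1 = 2 * (t - 1) + 1 by ring, X_two_mul, X_two_mul_add_one, X_two_mul_add_one,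
    ← ptSym_mul_apply, ← ptSym_mul_apply]
  refine ⟨DFunLike.congr_fun ?_ a, DFunLike.congr_fun ?_ a⟩
  · rw [h.e_mul_zpow_mul_zpow, mul_mul_zpow_of_mul_self_eq_one h.sq_a]
  · exact h.f_mul_zpow_mul_zpow r q _

theorem X_two_mul_add_one_rhd
    (h : GraphRelations k (ptSym a) (ptSym b) (ptSym c) (ptSym d) (ptSym e) (ptSym f))
    (t q r : ℤ) :
    X a b c d (2 * t + 1) q r ▷ e = X a b c d (2 * t + 1 + 1) (-q) (-r + 1) ∧
      X a b c d (2 * t + 1) q r ▷ f = X a b c d (2 * t + 1 - 1) (-q) (-r + 1) := by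
  rw [show 2 * t + 1 + 1 = 2 * (t + 1) by ring, add_sub_cancel_right, X_two_mul_add_one,
    X_two_mul, X_two_mul, ← ptSym_mul_apply, ← ptSym_mul_apply]
  refine ⟨DFunLike.congr_fun ?_ a, DFunLike.congr_fun ?_ a⟩
  · rw [h.e_mul_zpow_mul_zpow, ← mul_assoc (ptSym a), ← zpow_one_add, add_comm 1 t]
  · rw [h.f_mul_zpow_mul_zpow, ← mul_assoc (ptSym b), h.sq_b, one_mul]

end

theorem stmt_15
    {Q : Type*} [PaperQuandle Q] (k : ℤ) (a b c d e f : Q)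
    (rel_a : ∀ x : Q, x ▷ a ▷ a = x)
    (rel_b : ∀ x : Q, x ▷ b ▷ b = x)
    (rel_e : ∀ x : Q, x ▷ e ▷ e = x)
    (rel_f : ∀ x : Q, x ▷ f ▷ f = x)
    (rel_dea : ∀ x : Q, x ▷ d ▷ e ▷ a = x)
    (rel_bdf : ∀ x : Q, x ▷ b ▷ d ▷ f = x)
    (rel_cke : ∀ x : Q, (((ptSym b * ptSym a) ^ k) (x ▷ c)) ▷ a ▷ e = x) :
    ∀ p q r : ℤ,
      (Even p → X a b c d p q r ▷ e = X a b c d (p - 1) (-q) (-r + 1) ∧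
        X a b c d p q r ▷ f = X a b c d (p + 1) (-q) (-r + 1)) ∧
      (Odd p → X a b c d p q r ▷ e = X a b c d (p + 1) (-q) (-r + 1) ∧
        X a b c d p q r ▷ f = X a b c d (p - 1) (-q) (-r + 1)) := by
  have h : GraphRelations k (ptSym a) (ptSym b) (ptSym c) (ptSym d) (ptSym e) (ptSym f) :=
    ⟨Equiv.ext rel_a, Equiv.ext rel_b, Equiv.ext rel_e, Equiv.ext rel_f, Equiv.ext rel_dea,
      Equiv.ext rel_bdf, Equiv.ext rel_cke⟩
  intro p q r
  obtain ⟨t, rfl | rfl⟩ := Int.even_or_odd' p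
  · exact ⟨fun _ => X_two_mul_rhd h t q r,
      fun hodd => absurd hodd (Int.not_odd_iff_even.2 (even_two_mul t))⟩
  · exact ⟨fun heven => absurd heven (Int.not_even_iff_odd.2 (odd_two_mul_add_one t)),
      fun _ => X_two_mul_add_one_rhd h t q r⟩
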